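/- arXiv:2404.15125 — 4 statements merged into one kernel-verified Lean document; each statement's English description precedes it below -/
import Mathlib

section
/- Let V be an N-module that is generated in degrees ≤ n with respect to the sup norm (n ∈ ℕ). Then for every x ∈ N and every index i with x(i) ≥ n, the transition map V_x → V_{x+e_i} is surjective. -/
/-!
A generator `y ≤ x + eᵢ` of sup norm `≤ n ≤ x i` has `y i ≤ x i`, hence `y ≤ x`, so its
transition map into `V_{x+eᵢ}` factors through `V_x`.
-/

open CategoryTheory

/-- The poset `ℕ →₀ ℕ` of finitely supported sequences of naturals, with pointwise order,
regarded as a thin category. -/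
abbrev NPoset := ℕ →₀ ℕ

/-- The sup norm of `x : ℕ →₀ ℕ` is `max_i x i`. -/
noncomputable def supNorm (x : NPoset) : ℕ := x.support.sup x

/-- An `N`-module `V` is generated in degrees `≤ n` with respect to a norm if, for every `z`,
`V_z` is the sum of the images of the transition maps from objects `y ≤ z` of norm `≤ n`. -/
def GeneratedInDeg {k : Type} [CommRing k] (norm : NPoset → ℕ)
    (V : NPoset ⥤ ModuleCat k) (n : ℕ) : Prop :=
  ∀ z : NPoset,
    (⨆ (y : NPoset) (h : y ≤ z) (_ : norm y ≤ n),
      LinearMap.range (V.map (homOfLE h)).hom) = ⊤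

theorem range_map_homOfLE_le {P : Type*} [Preorder P] {k : Type*} [Ring k]
    (V : P ⥤ ModuleCat k) {y x z : P} (hyx : y ≤ x) (hxz : x ≤ z) :
    LinearMap.range (V.map (homOfLE (hyx.trans hxz))).hom ≤
      LinearMap.range (V.map (homOfLE hxz)).hom := by
  rw [show homOfLE (hyx.trans hxz) = homOfLE hyx ≫ homOfLE hxz from rfl, V.map_comp,
    ModuleCat.hom_comp]
  exact LinearMap.range_comp_le_range _ _

theorem apply_le_supNorm (y : NPoset) (j : ℕ) : y j ≤ supNorm y := by
  by_cases hj : j ∈ y.support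
  · exact Finset.le_sup (f := y) hj
  · simp [Finsupp.notMem_support_iff.mp hj]

theorem le_of_le_add_single_of_supNorm_le {x y : NPoset} {i : ℕ}
    (hy : y ≤ x + Finsupp.single i 1) (hny : supNorm y ≤ x i) : y ≤ x := by
  intro j
  obtain rfl | hji := eq_or_ne j i
  · exact (apply_le_supNorm y j).trans hny
  · simpa [Finsupp.single_apply, hji.symm] using hy j

/-- If `V` is generated in degrees `≤ n` with respect to the sup norm, then for every `x` and
every direction `i` with `x i ≥ n`, the transition map `V_x → V_{x + e_i}` is surjective. -/
theorem stmt0 {k : Type} [CommRing k] (V : NPoset ⥤ ModuleCat k) (n : ℕ)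
    (hV : GeneratedInDeg supNorm V n) (x : NPoset) (i : ℕ) (hx : n ≤ x i)
    (h : x ≤ x + Finsupp.single i 1) :
    Function.Surjective (V.map (homOfLE h)) := by
  rw [← LinearMap.range_eq_top, ← top_le_iff, ← hV (x + Finsupp.single i 1)]
  refine iSup_le fun y => iSup_le fun hy => iSup_le fun hny => ?_
  exact range_map_homOfLE_le V (le_of_le_add_single_of_supNorm_le hy (hny.trans hx)) h
end

section
/- Let V be an N-module that is presented in degrees ≤ n with respect to the sup norm. Then for every index i ∈ ℕ and every x ∈ N with x(i) ≥ n, the transition map V_x → V_{x+e_i} is injective. -/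
open CategoryTheory CategoryTheory.Limits

/-- `P x` is the `k`-linearization of the representable functor `N(x, -)`. -/
noncomputable def Pmod (k : Type) [CommRing k] (x : NPoset) : NPoset ⥤ ModuleCat k :=
  coyoneda.obj (Opposite.op x) ⋙ ModuleCat.free k

/-- `Q` is a (possibly infinite) direct sum of modules `P y` with `y ∈ S`. -/
def IsDirectSumOfP (k : Type) [CommRing k] (Q : NPoset ⥤ ModuleCat k) (S : Set NPoset) : Prop :=
  ∃ (ι : Type) (g : ι → NPoset) (_ : ∀ j, g j ∈ S)
    (incl : ∀ j, Pmod k (g j) ⟶ Q), Nonempty (IsColimit (Cofan.mk Q incl))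

/-- `V` is presented in degrees `≤ n` w.r.t. a norm: there is an exact sequence
`P¹ → P⁰ → V → 0` with `P⁰`, `P¹` direct sums of modules `P y` of norm `≤ n`. -/
def PresentedInDeg {k : Type} [CommRing k] (norm : NPoset → ℕ)
    (V : NPoset ⥤ ModuleCat k) (n : ℕ) : Prop :=
  ∃ (P1 P0 : NPoset ⥤ ModuleCat k) (d : P1 ⟶ P0) (p : P0 ⟶ V),
    IsDirectSumOfP k P1 {y | norm y ≤ n} ∧ IsDirectSumOfP k P0 {y | norm y ≤ n} ∧
    (∀ z : NPoset, Function.Surjective (p.app z)) ∧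
    (∀ z : NPoset, Function.Exact (d.app z) (p.app z))

lemma le_of_le_add_single {n : ℕ} {i : ℕ} {x y : NPoset} (hx : n ≤ x i)
    (hy : supNorm y ≤ n) (hle : y ≤ x + Finsupp.single i 1) : y ≤ x := by
  intro j
  rcases eq_or_ne j i with rfl | hji
  · calc y j ≤ supNorm y := by
          by_cases hj : y j = 0
          · simp [hj]
          · exact Finset.le_sup (Finsupp.mem_support_iff.mpr hj)
      _ ≤ n := hy
      _ ≤ x j := hx
  · have := hle j
    simpa [Finsupp.single_apply, hji.symm] using this

lemma Pmod_map_isIso {k : Type} [CommRing k] {n : ℕ} {i : ℕ} {x y : NPoset}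
    (hx : n ≤ x i) (hy : supNorm y ≤ n) (h : x ≤ x + Finsupp.single i 1) :
    IsIso ((Pmod k y).map (homOfLE h)) := by
  have key : IsIso ((coyoneda.obj (Opposite.op y)).map (homOfLE h)) := by
    rw [CategoryTheory.isIso_iff_bijective]
    constructor
    · intro a b _; exact Subsingleton.elim (α := y ⟶ x) a b
    · intro b
      refine ⟨homOfLE (le_of_le_add_single hx hy (leOfHom b)), ?_⟩
      exact Subsingleton.elim (α := y ⟶ x + Finsupp.single i 1) _ _
    -- maps between hom types in a thin category
  exact Functor.map_isIso (ModuleCat.free k) _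

lemma directSum_map_isIso {k : Type} [CommRing k] {n : ℕ} {i : ℕ} {x : NPoset}
    (Q : NPoset ⥤ ModuleCat k) (hQ : IsDirectSumOfP k Q {y | supNorm y ≤ n})
    (hx : n ≤ x i) (h : x ≤ x + Finsupp.single i 1) :
    IsIso (Q.map (homOfLE h)) := by
  obtain ⟨ι, g, hg, incl, ⟨hc⟩⟩ := hQ
  set x' := x + Finsupp.single i 1 with hx'
  have hcx := isColimitOfPreserves ((evaluation NPoset (ModuleCat k)).obj x) hc
  have hcx' := isColimitOfPreserves ((evaluation NPoset (ModuleCat k)).obj x') hc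
  have hiso : ∀ j : ι, IsIso ((Pmod k (g j)).map (homOfLE h)) :=
    fun j => Pmod_map_isIso hx (hg j) h
  let natiso :
      Discrete.functor (fun j => Pmod k (g j)) ⋙ (evaluation NPoset (ModuleCat k)).obj x ≅
      Discrete.functor (fun j => Pmod k (g j)) ⋙ (evaluation NPoset (ModuleCat k)).obj x' :=
    Discrete.natIso (fun j => @asIso _ _ _ _ _ (hiso j.as))
  have hQmap : Q.map (homOfLE h) = (IsColimit.coconePointsIsoOfNatIso hcx hcx' natiso).hom := by
    refine hcx.hom_ext (fun j => ?_)
    rw [IsColimit.comp_coconePointsIsoOfNatIso_hom]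
    simp only [natiso, Discrete.natIso_hom_app, asIso_hom]
    exact ((incl j.as).naturality (homOfLE h)).symm
  rw [hQmap]
  infer_instance

/-- If `V` is presented in degrees `≤ n` with respect to the sup norm, then for every index `i`
and every `x` with `x i ≥ n`, the transition map `V_x → V_{x + e_i}` is injective. -/
theorem stmt1 {k : Type} [CommRing k] (V : NPoset ⥤ ModuleCat k) (n : ℕ)
    (hV : PresentedInDeg supNorm V n) (i : ℕ) (x : NPoset) (hx : n ≤ x i)
    (h : x ≤ x + Finsupp.single i 1) :
    Function.Injective (V.map (homOfLE h)) := by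
  obtain ⟨P1, P0, d, p, hP1, hP0, hsurj, hex⟩ := hV
  have h1 : IsIso (P1.map (homOfLE h)) := directSum_map_isIso P1 hP1 hx h
  have h0 : IsIso (P0.map (homOfLE h)) := directSum_map_isIso P0 hP0 hx h
  have h1b := ConcreteCategory.bijective_of_isIso (P1.map (homOfLE h))
  have h0b := ConcreteCategory.bijective_of_isIso (P0.map (homOfLE h))
  rw [injective_iff_map_eq_zero]
  intro v hv
  obtain ⟨a, rfl⟩ := hsurj x v
  set x' := x + Finsupp.single i 1 with hx'
  have hnat : p.app x' (P0.map (homOfLE h) a) = V.map (homOfLE h) (p.app x a) := by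
    have := p.naturality (homOfLE h)
    calc p.app x' (P0.map (homOfLE h) a) = (P0.map (homOfLE h) ≫ p.app x') a := rfl
      _ = (p.app x ≫ V.map (homOfLE h)) a := by rw [this]
      _ = V.map (homOfLE h) (p.app x a) := rfl
  have h2 : p.app x' (P0.map (homOfLE h) a) = 0 := by rw [hnat, hv]
  obtain ⟨b', hb'⟩ := (hex x' _).mp h2
  obtain ⟨b, rfl⟩ := h1b.2 b'
  have h3 : P0.map (homOfLE h) (d.app x b) = P0.map (homOfLE h) a := by
    calc P0.map (homOfLE h) (d.app x b) = (d.app x ≫ P0.map (homOfLE h)) b := rfl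
      _ = (P1.map (homOfLE h) ≫ d.app x') b := by rw [d.naturality]
      _ = P0.map (homOfLE h) a := hb'
  have h4 : d.app x b = a := h0b.1 h3
  rw [← h4]
  exact (hex x _).mpr ⟨b, rfl⟩
end

section
/- Let V be an N-module that is presented in degrees ≤ n with respect to the sup norm. Then V admits a resolution ⋯ → P² → P¹ → P⁰ → V → 0 in which every term P^j is a (possibly infinite) direct sum of modules P(y) with y of sup norm ≤ n. (Equivalently, hd_s(V) ≤ pd(V) = max{hd_0(V), hd_1(V)} for all s ≥ 0.) -/
open CategoryTheory CategoryTheory.Limits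

/-- `V` admits a resolution `⋯ → P² → P¹ → P⁰ → V → 0` in which every term belongs to the
class of functors cut out by the predicate `good`. -/
def HasResolutionBy {k : Type} [CommRing k] (V : NPoset ⥤ ModuleCat k)
    (good : ℕ → (NPoset ⥤ ModuleCat k) → Prop) : Prop :=
  ∃ (P : ℕ → (NPoset ⥤ ModuleCat k)) (d : ∀ j : ℕ, P (j + 1) ⟶ P j) (p : P 0 ⟶ V),
    (∀ j, good j (P j)) ∧
    (∀ z : NPoset, Function.Surjective (p.app z)) ∧
    (∀ z : NPoset, Function.Exact ((d 0).app z) (p.app z)) ∧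
    (∀ (j : ℕ) (z : NPoset), Function.Exact ((d (j + 1)).app z) ((d j).app z))

/-!
Call an `N`-module `M` truncation invariant at `n` if every transition map `M (z ∧ n) → M z` is
bijective, where `z ∧ n` is `z` truncated pointwise at `n`. For `‖y‖ ≤ n` one has `y ≤ z` iff
`y ≤ z ∧ n`, so `P y` is truncation invariant; the property passes to direct sums, to cokernels of
maps between such modules (five lemma) and to kernels. Conversely, a truncation invariant `M` is a
quotient of the direct sum of copies of `P y`, `‖y‖ ≤ n`, one for each element of `M y`, because
`M z` is the image of `M (z ∧ n)`. A presentation makes `V` and `P⁰` truncation invariant, and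
covering kernels in this way over and over yields the resolution.
-/

noncomputable def truncate (n : ℕ) (z : NPoset) : NPoset :=
  Finsupp.mapRange (fun a => min a n) (Nat.zero_min n) z

@[simp]
lemma truncate_apply (n : ℕ) (z : NPoset) (i : ℕ) : truncate n z i = min (z i) n := by
  simp [truncate]

lemma truncate_le (n : ℕ) (z : NPoset) : truncate n z ≤ z :=
  fun i => by simp

lemma truncate_mono (n : ℕ) : Monotone (truncate n) :=
  fun _ _ h i => by simpa using min_le_min_right n (h i)

lemma supNorm_truncate_le (n : ℕ) (z : NPoset) : supNorm (truncate n z) ≤ n :=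
  Finset.sup_le fun i _ => by simp

lemma apply_le_of_supNorm_le {n : ℕ} {y : NPoset} (hy : supNorm y ≤ n) (i : ℕ) : y i ≤ n := by
  by_cases h : y i = 0
  · simp [h]
  · exact (Finset.le_sup (Finsupp.mem_support_iff.2 h)).trans hy

lemma le_truncate {n : ℕ} {y z : NPoset} (hy : supNorm y ≤ n) (hz : y ≤ z) : y ≤ truncate n z :=
  fun i => by simpa using ⟨hz i, apply_le_of_supNorm_le hy i⟩

noncomputable def truncateFunctor (n : ℕ) : NPoset ⥤ NPoset := (truncate_mono n).functor

noncomputable def truncateι (n : ℕ) : truncateFunctor n ⟶ 𝟭 NPoset where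
  app z := homOfLE (truncate_le n z)

section

variable {k : Type} [CommRing k]

lemma NatTrans.hom_comp_map {C : Type*} [Category C] {A B : C ⥤ ModuleCat k} (f : A ⟶ B) {z z' : C}
    (h : z ⟶ z') : (f.app z').hom ∘ₗ (A.map h).hom = (B.map h).hom ∘ₗ (f.app z).hom := by
  rw [← ModuleCat.hom_comp, ← ModuleCat.hom_comp, f.naturality]

noncomputable def pointwiseKer {C : Type*} [Category C] {A B : C ⥤ ModuleCat k} (f : A ⟶ B) :
    C ⥤ ModuleCat k where
  obj z := ModuleCat.of k (LinearMap.ker (f.app z).hom)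
  map {z z'} h := ModuleCat.ofHom <| (A.map h).hom.restrict fun x hx => by
    simp only [LinearMap.mem_ker] at hx ⊢
    rw [← LinearMap.comp_apply, NatTrans.hom_comp_map, LinearMap.comp_apply, hx, map_zero]
  map_id z := by ext; simp
  map_comp h h' := by ext; simp

noncomputable def pointwiseKer.ι {C : Type*} [Category C] {A B : C ⥤ ModuleCat k} (f : A ⟶ B) :
    pointwiseKer f ⟶ A where
  app z := ModuleCat.ofHom (LinearMap.ker (f.app z).hom).subtype

lemma pointwiseKer.exact_ι {C : Type*} [Category C] {A B : C ⥤ ModuleCat k} (f : A ⟶ B) (z : C) :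
    Function.Exact ((pointwiseKer.ι f).app z) (f.app z) :=
  LinearMap.exact_subtype_ker_map _

def IsTruncationInvariant (n : ℕ) (M : NPoset ⥤ ModuleCat k) : Prop :=
  ∀ z, Function.Bijective (M.map ((truncateι n).app z))

lemma isTruncationInvariant_iff_isIso (n : ℕ) (M : NPoset ⥤ ModuleCat k) :
    IsTruncationInvariant n M ↔ IsIso (Functor.whiskerRight (truncateι n) M) := by
  simp only [NatTrans.isIso_iff_isIso_app, ConcreteCategory.isIso_iff_bijective]
  rfl

lemma isTruncationInvariant_Pmod {n : ℕ} {y : NPoset} (hy : supNorm y ≤ n) :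
    IsTruncationInvariant n (Pmod k y) := by
  intro z
  let e : (y ⟶ truncate n z) ≃ (y ⟶ z) :=
    { toFun := fun h => h ≫ (truncateι n).app z
      invFun := fun h => homOfLE (le_truncate hy (leOfHom h))
      left_inv := fun _ => Subsingleton.elim _ _
      right_inv := fun _ => Subsingleton.elim _ _ }
  exact ⟨Finsupp.mapDomain_injective e.injective, Finsupp.mapDomain_surjective e.surjective⟩

lemma IsTruncationInvariant.of_isColimit {n : ℕ} {J : Type} [SmallCategory J]
    {K : J ⥤ (NPoset ⥤ ModuleCat k)} (hK : ∀ j, IsTruncationInvariant n (K.obj j))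
    {c : Cocone K} (hc : IsColimit c) : IsTruncationInvariant n c.pt := by
  have : IsIso (Functor.whiskerLeft K ((Functor.whiskeringLeft _ _ _).map (truncateι n))) :=
    NatTrans.isIso_iff_isIso_app _ |>.2 fun j => (isTruncationInvariant_iff_isIso n _).1 (hK j)
  exact (isTruncationInvariant_iff_isIso n _).2
    (isIso_app_coconePt_of_preservesColimit K
      ((Functor.whiskeringLeft _ _ _).map (truncateι n)) c hc)

lemma isTruncationInvariant_of_isDirectSumOfP {n : ℕ} {Q : NPoset ⥤ ModuleCat k}
    (hQ : IsDirectSumOfP k Q {y | supNorm y ≤ n}) : IsTruncationInvariant n Q := by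
  obtain ⟨_, _, hg, _, ⟨hc⟩⟩ := hQ
  exact IsTruncationInvariant.of_isColimit (fun j => isTruncationInvariant_Pmod (hg j.as)) hc

lemma IsTruncationInvariant.of_exact_of_surjective {n : ℕ} {P₁ P₀ V : NPoset ⥤ ModuleCat k}
    (h₁ : IsTruncationInvariant n P₁) (h₀ : IsTruncationInvariant n P₀) (d : P₁ ⟶ P₀)
    (p : P₀ ⟶ V) (hp : ∀ z, Function.Surjective (p.app z))
    (hdp : ∀ z, Function.Exact (d.app z) (p.app z)) : IsTruncationInvariant n V := fun z =>
  LinearMap.bijective_of_surjective_of_bijective_of_right_exact _ _ _ _ _ _ _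
    (NatTrans.hom_comp_map d _) (NatTrans.hom_comp_map p _) (hdp _) (hdp _) (h₁ z).2 (h₀ z)
    (hp _) (hp _)

lemma IsTruncationInvariant.pointwiseKer {n : ℕ} {A B : NPoset ⥤ ModuleCat k} (f : A ⟶ B)
    (hA : IsTruncationInvariant n A) (hB : IsTruncationInvariant n B) :
    IsTruncationInvariant n (pointwiseKer f) := fun z =>
  LinearMap.bijective_of_bijective_of_injective_of_left_exact _ _ _ _ _ _ _
    (NatTrans.hom_comp_map (pointwiseKer.ι f) _) (NatTrans.hom_comp_map f _)
    (pointwiseKer.exact_ι f _) (pointwiseKer.exact_ι f _) (hA z) (hB z).1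
    Subtype.val_injective Subtype.val_injective

noncomputable def Pmod.lift {M : NPoset ⥤ ModuleCat k} {y : NPoset} (m : M.obj y) :
    Pmod k y ⟶ M where
  app z := ModuleCat.freeDesc (TypeCat.ofHom fun h : y ⟶ z => M.map h m)
  naturality z z' f := by
    apply ModuleCat.free_hom_ext
    intro h
    simp [Pmod]

lemma Pmod.lift_app_freeMk {M : NPoset ⥤ ModuleCat k} {y z : NPoset} (m : M.obj y)
    (h : y ⟶ z) : (Pmod.lift m).app z (ModuleCat.freeMk h) = M.map h m :=
  ModuleCat.freeDesc_apply _ h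

abbrev LowDegElem (n : ℕ) (M : NPoset ⥤ ModuleCat k) : Type :=
  Σ y : {y : NPoset // supNorm y ≤ n}, M.obj y

noncomputable def lowDegCover (n : ℕ) (M : NPoset ⥤ ModuleCat k) : NPoset ⥤ ModuleCat k :=
  ∐ fun i : LowDegElem n M => Pmod k i.1.1

noncomputable def lowDegCover.π (n : ℕ) (M : NPoset ⥤ ModuleCat k) : lowDegCover n M ⟶ M :=
  Sigma.desc fun i => Pmod.lift i.2

lemma isDirectSumOfP_lowDegCover (n : ℕ) (M : NPoset ⥤ ModuleCat k) :
    IsDirectSumOfP k (lowDegCover n M) {y | supNorm y ≤ n} :=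
  ⟨LowDegElem n M, fun i => i.1.1, fun i => i.1.2, _, ⟨coproductIsCoproduct _⟩⟩

lemma lowDegCover.π_app_surjective {n : ℕ} {M : NPoset ⥤ ModuleCat k}
    (hM : IsTruncationInvariant n M) (z : NPoset) :
    Function.Surjective ((lowDegCover.π n M).app z) := by
  intro m
  obtain ⟨m', rfl⟩ := (hM z).2 m
  let i : LowDegElem n M := ⟨⟨truncate n z, supNorm_truncate_le n z⟩, m'⟩
  refine ⟨(Sigma.ι (fun i : LowDegElem n M => Pmod k i.1.1) i).app z
    (ModuleCat.freeMk ((truncateι n).app z)), ?_⟩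
  have h : Sigma.ι _ i ≫ lowDegCover.π n M = Pmod.lift m' := Sigma.ι_desc _ i
  rw [← Pmod.lift_app_freeMk, ← h]
  rfl

noncomputable def syzygy (n : ℕ) {A B : NPoset ⥤ ModuleCat k} (f : A ⟶ B) :
    lowDegCover n (pointwiseKer f) ⟶ A :=
  lowDegCover.π n (pointwiseKer f) ≫ pointwiseKer.ι f

lemma exact_syzygy {n : ℕ} {A B : NPoset ⥤ ModuleCat k} (f : A ⟶ B)
    (hf : IsTruncationInvariant n (pointwiseKer f)) (z : NPoset) :
    Function.Exact ((syzygy n f).app z) (f.app z) :=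
  (lowDegCover.π_app_surjective hf z).comp_exact_iff_exact.2 (pointwiseKer.exact_ι f z)

/-- Arrow `j + 1` is the differential `P (j + 1) ⟶ P j` and arrow `0` is `p : P 0 ⟶ V`; the
target of arrow `j + 1` is the source of arrow `j` by definition. -/
noncomputable def syzygyTower (n : ℕ) {P₀ V : NPoset ⥤ ModuleCat k} (p : P₀ ⟶ V) :
    ℕ → Arrow (NPoset ⥤ ModuleCat k)
  | 0 => Arrow.mk p
  | j + 1 => Arrow.mk (syzygy n (syzygyTower n p j).hom)

lemma isTruncationInvariant_syzygyTower {n : ℕ} {P₀ V : NPoset ⥤ ModuleCat k} (p : P₀ ⟶ V)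
    (hP₀ : IsTruncationInvariant n P₀) (hV : IsTruncationInvariant n V) :
    ∀ j, IsTruncationInvariant n (syzygyTower n p j).left ∧
      IsTruncationInvariant n (syzygyTower n p j).right
  | 0 => ⟨hP₀, hV⟩
  | j + 1 => ⟨isTruncationInvariant_of_isDirectSumOfP (isDirectSumOfP_lowDegCover _ _),
      (isTruncationInvariant_syzygyTower p hP₀ hV j).1⟩

end

/-- An `N`-module presented in degrees `≤ n` (sup norm) has a resolution all of whose terms are
direct sums of modules `P y` with `supNorm y ≤ n`. -/
theorem stmt4 {k : Type} [CommRing k] (V : NPoset ⥤ ModuleCat k) (n : ℕ)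
    (hV : PresentedInDeg supNorm V n) :
    HasResolutionBy V (fun _ Q => IsDirectSumOfP k Q {y | supNorm y ≤ n}) := by
  obtain ⟨P₁, P₀, d, p, hP₁, hP₀, hp, hdp⟩ := hV
  have hP₀' := isTruncationInvariant_of_isDirectSumOfP hP₀
  have hV' := (isTruncationInvariant_of_isDirectSumOfP hP₁).of_exact_of_surjective hP₀' d p hp hdp
  have hK (j : ℕ) : IsTruncationInvariant n (pointwiseKer (syzygyTower n p j).hom) :=
    have h := isTruncationInvariant_syzygyTower p hP₀' hV' j
    h.1.pointwiseKer _ h.2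
  refine ⟨fun j => (syzygyTower n p j).left, fun j => (syzygyTower n p (j + 1)).hom, p, ?_, hp,
    exact_syzygy p (hK 0), fun j => exact_syzygy _ (hK (j + 1))⟩
  rintro (_ | j)
  · exact hP₀
  · exact isDirectSumOfP_lowDegCover _ _
end

section
/- Let f : V → W be a morphism of N-modules such that V is presented in degrees ≤ m and W is presented in degrees ≤ n with respect to the sup norm. Then the kernel and the cokernel of f, computed in the functor category N ⥤ ModuleCat k, are each presented in degrees ≤ N' for some finite N'. Consequently, the full subcategory of N-modules presented in finite sup-norm degrees is an abelian subcategory of the category of all N-modules. -/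
open CategoryTheory CategoryTheory.Limits

/-
Realize every direct sum `⨁ᵢ P(g i)` concretely as the functor whose value at `w` is the free
`k`-module on the indices `i` with `g i ≤ w`; morphisms out of it are free choices of elements
`x i` in degree `g i`. Take presentations of `V` and `W` with generators and relations of sup norm
`≤ M := max m n`. Lifting `V`'s generators along `f` through `W`'s generators and adding `W`'s
relations gives `ψ : ⨁ P(a i) ⊕ ⨁ P(b₁ i) ⟶ ⨁ P(b₀ i)`, which presents `coker f`, and `ker ψ`
maps onto `ker f`. An element of `ker ψ` in degree `z` involves finitely many indices, so it
already lies in `ker ψ` in degree `y`, the pointwise maximum of their degrees, and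
`supNorm y ≤ M`. Hence `ker f` is generated in sup norm `≤ M`; the same argument applied to that
cover of `ker f` and the presentation of `V` bounds the relations of `ker f`.
-/

lemma supNorm_le_iff {x : NPoset} {M : ℕ} : supNorm x ≤ M ↔ ∀ t, x t ≤ M := by
  refine ⟨fun h t => ?_, fun h => Finset.sup_le fun t _ => h t⟩
  by_cases ht : t ∈ x.support
  · exact (Finset.le_sup (f := x) ht).trans h
  · simp [Finsupp.notMem_support_iff.1 ht]

lemma supNorm_finset_sup_le {ι : Type*} {s : Finset ι} {g : ι → NPoset} {M : ℕ}
    (hg : ∀ i ∈ s, supNorm (g i) ≤ M) : supNorm (s.sup g) ≤ M := by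
  refine Finset.sup_induction (p := fun y => supNorm y ≤ M)
    (by simp [supNorm_le_iff, bot_eq_zero]) (fun x hx y hy => ?_) hg
  simp only [supNorm_le_iff, Finsupp.sup_apply, sup_le_iff] at hx hy ⊢
  exact fun t => ⟨hx t, hy t⟩

lemma Finsupp.supported_linearMap_ext {R ι N : Type*} [Semiring R] [AddCommMonoid N]
    [Module R N] {S : Set ι} {a b : Finsupp.supported R R S →ₗ[R] N}
    (h : ∀ i (hi : i ∈ S), a ⟨Finsupp.single i 1, Finsupp.single_mem_supported R 1 hi⟩ =
      b ⟨Finsupp.single i 1, Finsupp.single_mem_supported R 1 hi⟩) : a = b := by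
  let e := Finsupp.supportedEquivFinsupp (M := R) (R := R) S
  have : a ∘ₗ e.symm.toLinearMap = b ∘ₗ e.symm.toLinearMap := by
    refine Finsupp.lhom_ext' fun i => LinearMap.ext_ring ?_
    have he : e.symm (Finsupp.single i 1) =
        ⟨Finsupp.single i 1, Finsupp.single_mem_supported R 1 i.2⟩ :=
      Subtype.ext (by simp [e])
    simpa [he] using h i i.2
  ext x
  simpa using congr($this (e x))

section

variable {k : Type} [CommRing k]

noncomputable def Pmod.homEquiv (y : NPoset) (X : NPoset ⥤ ModuleCat k) :
    (Pmod k y ⟶ X) ≃ X.obj y :=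
  (((ModuleCat.adj k).whiskerRight NPoset).homEquiv _ _).trans coyonedaEquiv

lemma Pmod.homEquiv_comp {y : NPoset} {X Y : NPoset ⥤ ModuleCat k} (a : Pmod k y ⟶ X)
    (b : X ⟶ Y) : Pmod.homEquiv y Y (a ≫ b) = b.app y (Pmod.homEquiv y X a) := rfl

/-- A concrete model of `⨁ᵢ P(g i)`, see `sumP.isColimit`. -/
noncomputable def sumP (k : Type) [CommRing k] {ι : Type} (g : ι → NPoset) :
    NPoset ⥤ ModuleCat k where
  obj w := ModuleCat.of k (Finsupp.supported k k {i | g i ≤ w})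
  map h := ModuleCat.ofHom <| Submodule.inclusion <|
    Finsupp.supported_mono fun _ (hi : _ ≤ _) => hi.trans (leOfHom h)

namespace sumP

variable {ι ι₁ : Type} {g : ι → NPoset} {g₁ : ι₁ → NPoset} {X : NPoset ⥤ ModuleCat k}

lemma map_injective {w w' : NPoset} (h : w ⟶ w') : Function.Injective ((sumP k g).map h) :=
  Submodule.inclusion_injective <|
    Finsupp.supported_mono fun _ (hi : _ ≤ _) => hi.trans (leOfHom h)

noncomputable def basis (g : ι → NPoset) (j : ι) : (sumP k g).obj (g j) :=
  (⟨Finsupp.single j 1, Finsupp.single_mem_supported k 1 (le_refl (g j))⟩ :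
    Finsupp.supported k k {i | g i ≤ g j})

lemma hom_ext {a b : sumP k g ⟶ X}
    (h : ∀ j, a.app (g j) (basis g j) = b.app (g j) (basis g j)) : a = b := by
  ext w : 2
  refine ModuleCat.hom_ext (Finsupp.supported_linearMap_ext fun i (hi : g i ≤ w) => ?_)
  change a.app w ((sumP k g).map (homOfLE hi) (basis g i)) =
    b.app w ((sumP k g).map (homOfLE hi) (basis g i))
  rw [NatTrans.naturality_apply, NatTrans.naturality_apply, h]

noncomputable def desc (X : NPoset ⥤ ModuleCat k) (x : ∀ j, X.obj (g j)) : sumP k g ⟶ X where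
  app w := ModuleCat.ofHom <| Finsupp.lsum k (fun i =>
      if h : g i ≤ w then LinearMap.toSpanSingleton k (X.obj w) (X.map (homOfLE h) (x i))
      else 0) ∘ₗ Submodule.subtype _
  naturality {w w'} h := by
    refine ModuleCat.hom_ext (Finsupp.supported_linearMap_ext fun i (hi : g i ≤ w) => ?_)
    have hi' : g i ≤ w' := hi.trans (leOfHom h)
    change Finsupp.lsum k _ (Finsupp.single i (1 : k)) =
      X.map h (Finsupp.lsum k _ (Finsupp.single i (1 : k)))
    simp only [Finsupp.lsum_single, dif_pos hi, dif_pos hi', LinearMap.toSpanSingleton_apply,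
      one_smul, ← ConcreteCategory.comp_apply, ← Functor.map_comp]
    rfl

@[simp]
lemma desc_app_basis (X : NPoset ⥤ ModuleCat k) (x : ∀ j, X.obj (g j)) (j : ι) :
    (desc X x).app (g j) (basis g j) = x j := by
  change Finsupp.lsum k _ (Finsupp.single j 1) = _
  simp [homOfLE_refl]

lemma desc_app_basis_eq (φ : sumP k g ⟶ X) : desc X (fun j => φ.app (g j) (basis g j)) = φ :=
  hom_ext fun j => desc_app_basis _ _ j

noncomputable def incl (g : ι → NPoset) (j : ι) : Pmod k (g j) ⟶ sumP k g :=
  (Pmod.homEquiv _ _).symm (basis g j)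

lemma homEquiv_incl (g : ι → NPoset) (j : ι) :
    Pmod.homEquiv _ _ (incl (k := k) g j) = basis g j :=
  Equiv.apply_symm_apply _ _

noncomputable def isColimit (g : ι → NPoset) :
    IsColimit (Cofan.mk (sumP k g) (incl (k := k) g)) :=
  Cofan.IsColimit.mk _ (fun s => desc s.pt fun j => Pmod.homEquiv _ _ (s.inj j))
    (fun s j => (Pmod.homEquiv _ _).injective <| (Pmod.homEquiv_comp (incl g j) _).trans <| by
      rw [homEquiv_incl, desc_app_basis])
    (fun s m hm => hom_ext fun j => by
      rw [desc_app_basis, ← hm j]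
      exact congrArg (m.app (g j)) (homEquiv_incl g j).symm)

lemma exists_lift {Y : NPoset ⥤ ModuleCat k} {p : X ⟶ Y}
    (hp : ∀ z, Function.Surjective (p.app z)) (φ : sumP k g ⟶ Y) :
    ∃ φ' : sumP k g ⟶ X, φ' ≫ p = φ := by
  choose x hx using fun j => hp (g j) (φ.app (g j) (basis g j))
  exact ⟨desc X x, hom_ext fun j => by simp [hx]⟩

lemma exists_eq_map_of_supNorm_le {M : ℕ} (hg : ∀ i, supNorm (g i) ≤ M) {z : NPoset}
    (c : (sumP k g).obj z) :
    ∃ (y : NPoset) (h : y ≤ z), supNorm y ≤ M ∧ ∃ c₀, (sumP k g).map (homOfLE h) c₀ = c := by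
  classical
  obtain ⟨s, hs⟩ := (c : Finsupp.supported k k {i | g i ≤ z})
  exact ⟨s.support.sup g, Finset.sup_le fun i hi => hs hi, supNorm_finset_sup_le fun i _ => hg i,
    ⟨s, fun _ hi => Finset.le_sup (f := g) hi⟩, rfl⟩

noncomputable def inl (g : ι → NPoset) (g₁ : ι₁ → NPoset) :
    sumP k g ⟶ sumP k (Sum.elim g g₁) :=
  desc _ fun j => basis (Sum.elim g g₁) (.inl j)

noncomputable def inr (g : ι → NPoset) (g₁ : ι₁ → NPoset) :
    sumP k g₁ ⟶ sumP k (Sum.elim g g₁) :=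
  desc _ fun j => basis (Sum.elim g g₁) (.inr j)

lemma inl_app_basis (j : ι) :
    (inl g g₁).app (g j) (basis g j) = (basis (Sum.elim g g₁) (.inl j) : (sumP k _).obj _) :=
  desc_app_basis _ _ j

lemma inr_app_basis (j : ι₁) :
    (inr g g₁).app (g₁ j) (basis g₁ j) = (basis (Sum.elim g g₁) (.inr j) : (sumP k _).obj _) :=
  desc_app_basis _ _ j

lemma inl_desc (x : ∀ t, X.obj (Sum.elim g g₁ t)) :
    inl g g₁ ≫ desc X x = desc X (fun j => x (.inl j)) :=
  hom_ext fun j => by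
    rw [NatTrans.comp_app_apply, inl_app_basis]
    exact (desc_app_basis X x (.inl j)).trans (desc_app_basis X (fun j => x (.inl j)) j).symm

lemma inr_desc (x : ∀ t, X.obj (Sum.elim g g₁ t)) :
    inr g g₁ ≫ desc X x = desc X (fun j => x (.inr j)) :=
  hom_ext fun j => by
    rw [NatTrans.comp_app_apply, inr_app_basis]
    exact (desc_app_basis X x (.inr j)).trans (desc_app_basis X (fun j => x (.inr j)) j).symm

lemma sum_hom_ext {a b : sumP k (Sum.elim g g₁) ⟶ X} (hl : inl g g₁ ≫ a = inl g g₁ ≫ b)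
    (hr : inr g g₁ ≫ a = inr g g₁ ≫ b) : a = b := by
  refine hom_ext (Sum.rec (fun j => ?_) (fun j => ?_))
  · have := congr(($hl).app (g j) (basis g j))
    rwa [NatTrans.comp_app_apply, NatTrans.comp_app_apply, inl_app_basis] at this
  · have := congr(($hr).app (g₁ j) (basis g₁ j))
    rwa [NatTrans.comp_app_apply, NatTrans.comp_app_apply, inr_app_basis] at this

end sumP

lemma isDirectSumOfP_sumP {ι : Type} {g : ι → NPoset} {S : Set NPoset} (hg : ∀ j, g j ∈ S) :
    IsDirectSumOfP k (sumP k g) S :=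
  ⟨ι, g, hg, _, ⟨sumP.isColimit g⟩⟩

lemma IsDirectSumOfP.exists_iso_sumP {Q : NPoset ⥤ ModuleCat k} {S : Set NPoset}
    (h : IsDirectSumOfP k Q S) :
    ∃ (ι : Type) (g : ι → NPoset) (_ : ∀ j, g j ∈ S), Nonempty (Q ≅ sumP k g) := by
  obtain ⟨ι, g, hg, incl, ⟨hc⟩⟩ := h
  exact ⟨ι, g, hg, ⟨hc.coconePointUniqueUpToIso (sumP.isColimit g)⟩⟩

lemma IsDirectSumOfP.mono {Q : NPoset ⥤ ModuleCat k} {S T : Set NPoset}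
    (h : IsDirectSumOfP k Q S) (hST : S ⊆ T) : IsDirectSumOfP k Q T := by
  obtain ⟨ι, g, hg, incl, hc⟩ := h
  exact ⟨ι, g, fun j => hST (hg j), incl, hc⟩

lemma PresentedInDeg.mono {norm : NPoset → ℕ} {V : NPoset ⥤ ModuleCat k} {m n : ℕ}
    (h : PresentedInDeg norm V m) (hmn : m ≤ n) : PresentedInDeg norm V n := by
  obtain ⟨P₁, P₀, d, p, h₁, h₀, hp, hdp⟩ := h
  exact ⟨P₁, P₀, d, p, h₁.mono fun _ hy => hy.trans hmn, h₀.mono fun _ hy => hy.trans hmn,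
    hp, hdp⟩

lemma ModuleCat.exact_conj_iso {A₁ A₀ B₁ B₀ C : ModuleCat k} {d : A₁ ⟶ A₀} {p : A₀ ⟶ C}
    (h : Function.Exact d p) (e₁ : A₁ ≅ B₁) (e₀ : A₀ ≅ B₀) :
    Function.Exact (e₁.inv ≫ d ≫ e₀.hom) (e₀.inv ≫ p) :=
  LinearEquiv.precomp_exact_iff_exact (e := e₁.toLinearEquiv.symm) |>.2 <|
    (LinearEquiv.conj_exact_iff_exact d.hom p.hom e₀.toLinearEquiv).2 h

lemma presentedInDeg_iff {norm : NPoset → ℕ} {V : NPoset ⥤ ModuleCat k} {n : ℕ} :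
    PresentedInDeg norm V n ↔
      ∃ (ι₁ ι₀ : Type) (g₁ : ι₁ → NPoset) (g₀ : ι₀ → NPoset) (_ : ∀ i, norm (g₁ i) ≤ n)
        (_ : ∀ i, norm (g₀ i) ≤ n) (d : sumP k g₁ ⟶ sumP k g₀) (p : sumP k g₀ ⟶ V),
        (∀ z, Function.Surjective (p.app z)) ∧ ∀ z, Function.Exact (d.app z) (p.app z) := by
  constructor
  · rintro ⟨P₁, P₀, d, p, h₁, h₀, hp, hdp⟩
    obtain ⟨ι₁, g₁, hg₁, ⟨e₁⟩⟩ := h₁.exists_iso_sumP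
    obtain ⟨ι₀, g₀, hg₀, ⟨e₀⟩⟩ := h₀.exists_iso_sumP
    refine ⟨ι₁, ι₀, g₁, g₀, hg₁, hg₀, e₁.inv ≫ d ≫ e₀.hom, e₀.inv ≫ p, fun z x => ?_,
      fun z => ModuleCat.exact_conj_iso (hdp z) (e₁.app z) (e₀.app z)⟩
    obtain ⟨y, rfl⟩ := hp z x
    exact ⟨e₀.hom.app z y, by simp⟩
  · rintro ⟨ι₁, ι₀, g₁, g₀, hg₁, hg₀, d, p, hp, hdp⟩
    exact ⟨_, _, d, p, isDirectSumOfP_sumP hg₁, isDirectSumOfP_sumP hg₀, hp, hdp⟩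

section FunctorCategory

variable {C : Type*} [Category C] {V W X : C ⥤ ModuleCat k} (f : V ⟶ W)

lemma exact_kernel_ι_app (z : C) : Function.Exact ((kernel.ι f).app z) (f.app z) :=
  (ShortComplex.ShortExact.moduleCat_exact_iff_function_exact _).1 <|
    (ShortComplex.exact_kernel f).map ((evaluation C (ModuleCat k)).obj z)

lemma exact_cokernel_π_app (z : C) : Function.Exact (f.app z) ((cokernel.π f).app z) :=
  (ShortComplex.ShortExact.moduleCat_exact_iff_function_exact _).1 <|
    (ShortComplex.exact_cokernel f).map ((evaluation C (ModuleCat k)).obj z)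

lemma cokernel_π_app_surjective (z : C) : Function.Surjective ((cokernel.π f).app z) :=
  (ModuleCat.epi_iff_surjective _).1 inferInstance

lemma comp_eq_zero_of_exact_app {q : X ⟶ V} (hq : ∀ z, Function.Exact (q.app z) (f.app z)) :
    q ≫ f = 0 := by
  ext z x
  exact (hq z).apply_apply_eq_zero x

lemma kernel_lift_app_surjective {q : X ⟶ V} (hq : ∀ z, Function.Exact (q.app z) (f.app z))
    (z : C) : Function.Surjective ((kernel.lift f q (comp_eq_zero_of_exact_app f hq)).app z) := by
  intro t
  obtain ⟨x, hx⟩ := (hq z _).1 ((exact_kernel_ι_app f z).apply_apply_eq_zero t)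
  refine ⟨x, (ModuleCat.mono_iff_injective ((kernel.ι f).app z)).1 inferInstance ?_⟩
  rw [← hx, ← NatTrans.comp_app_apply, kernel.lift_ι]

lemma exact_kernel_lift_app_iff {q : X ⟶ V} (hq : ∀ z, Function.Exact (q.app z) (f.app z))
    {Y : C ⥤ ModuleCat k} (r : Y ⟶ X) (z : C) :
    Function.Exact (r.app z) ((kernel.lift f q (comp_eq_zero_of_exact_app f hq)).app z) ↔
      Function.Exact (r.app z) (q.app z) := by
  rw [← Function.Injective.comp_exact_iff_exact
    ((ModuleCat.mono_iff_injective ((kernel.ι f).app z)).1 inferInstance),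
    ← ModuleCat.hom_comp, ← NatTrans.comp_app, kernel.lift_ι]

end FunctorCategory

def KernelGeneratedInDeg {V W : NPoset ⥤ ModuleCat k} (f : V ⟶ W) (M : ℕ) : Prop :=
  ∃ (ι : Type) (g : ι → NPoset) (_ : ∀ i, supNorm (g i) ≤ M) (q : sumP k g ⟶ V),
    ∀ z, Function.Exact (q.app z) (f.app z)

/-- An element of `ker ψ` in degree `z` comes from degree `y`, the maximum of the `g i` over its
support, where it is already in `ker ψ` because `X` has injective transition maps; and
`supNorm y ≤ M` since the sup norm of a pointwise maximum is the maximum of the sup norms. -/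
lemma kernelGeneratedInDeg_of_map_injective {ι : Type} {g : ι → NPoset} {M : ℕ}
    (hg : ∀ i, supNorm (g i) ≤ M) {X : NPoset ⥤ ModuleCat k}
    (hX : ∀ {w w' : NPoset} (h : w ⟶ w'), Function.Injective (X.map h)) (ψ : sumP k g ⟶ X) :
    KernelGeneratedInDeg ψ M := by
  let T := Σ' (y : NPoset) (_ : supNorm y ≤ M), {c : (sumP k g).obj y // ψ.app y c = 0}
  let κ : sumP k (fun t : T => t.1) ⟶ sumP k g := sumP.desc _ fun t => t.2.2.1
  have hκψ : κ ≫ ψ = 0 := sumP.hom_ext fun t => by simpa [κ] using t.2.2.2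
  refine ⟨T, fun t => t.1, fun t => t.2.1, κ, fun z c => ⟨fun hc => ?_, ?_⟩⟩
  · obtain ⟨y, hyz, hy, c₀, rfl⟩ := sumP.exists_eq_map_of_supNorm_le hg c
    have hc₀ : ψ.app y c₀ = 0 :=
      hX (homOfLE hyz) (by rw [← NatTrans.naturality_apply, hc, map_zero])
    let t : T := ⟨y, hy, c₀, hc₀⟩
    refine ⟨(sumP k _).map (homOfLE hyz) (sumP.basis (fun t : T => t.1) t), ?_⟩
    rw [NatTrans.naturality_apply]
    exact congrArg _ (sumP.desc_app_basis (sumP k g) (fun t : T => t.2.2.1) t)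
  · rintro ⟨e, rfl⟩
    simpa using congr(($hκψ).app z e)

lemma exists_sumP_pullback_cover {ι ι₁ ι₀ : Type} {a : ι → NPoset} {b₁ : ι₁ → NPoset}
    {b₀ : ι₀ → NPoset} {W : NPoset ⥤ ModuleCat k} (φ : sumP k a ⟶ W)
    (d : sumP k b₁ ⟶ sumP k b₀) (p : sumP k b₀ ⟶ W) (hp : ∀ z, Function.Surjective (p.app z))
    (hdp : ∀ z, Function.Exact (d.app z) (p.app z)) :
    ∃ (ψ : sumP k (Sum.elim a b₁) ⟶ sumP k b₀) (π : sumP k (Sum.elim a b₁) ⟶ sumP k a),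
      ψ ≫ p = π ≫ φ ∧ ∀ z x x', p.app z x = φ.app z x' →
        ∃ c, ψ.app z c = x ∧ π.app z c = x' := by
  obtain ⟨h, hh⟩ := sumP.exists_lift hp φ
  let ψ : sumP k (Sum.elim a b₁) ⟶ sumP k b₀ :=
    sumP.desc _ (Sum.rec (fun j => h.app _ (sumP.basis a j)) (fun j => d.app _ (sumP.basis b₁ j)))
  let π : sumP k (Sum.elim a b₁) ⟶ sumP k a :=
    sumP.desc _ (Sum.rec (fun j => sumP.basis a j) (fun _ => 0))
  have inl_ψ : sumP.inl a b₁ ≫ ψ = h := (sumP.inl_desc _).trans (sumP.desc_app_basis_eq h)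
  have inr_ψ : sumP.inr a b₁ ≫ ψ = d := (sumP.inr_desc _).trans (sumP.desc_app_basis_eq d)
  have inl_π : sumP.inl a b₁ ≫ π = 𝟙 _ :=
    (sumP.inl_desc _).trans (sumP.hom_ext fun j => sumP.desc_app_basis _ _ j)
  have inr_π : sumP.inr a b₁ ≫ π = 0 :=
    (sumP.inr_desc _).trans (sumP.hom_ext fun j => sumP.desc_app_basis _ _ j)
  refine ⟨ψ, π, sumP.sum_hom_ext ?_ ?_, fun z x x' hx => ?_⟩
  · rw [reassoc_of% inl_ψ, reassoc_of% inl_π, hh]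
  · rw [reassoc_of% inr_ψ, reassoc_of% inr_π, comp_eq_zero_of_exact_app p hdp, zero_comp]
  · have : p.app z (x - h.app z x') = 0 := by
      rw [map_sub, ← NatTrans.comp_app_apply, hh, hx, sub_self]
    obtain ⟨u, hu⟩ := (hdp z _).1 this
    refine ⟨(sumP.inl a b₁).app z x' + (sumP.inr a b₁).app z u, ?_, ?_⟩
    · simp only [map_add, ← NatTrans.comp_app_apply, inl_ψ, inr_ψ, hu, add_sub_cancel]
    · simp only [map_add, ← NatTrans.comp_app_apply, inl_π, inr_π]
      simp

lemma kernelGeneratedInDeg_of_cover {V W : NPoset ⥤ ModuleCat k} {M : ℕ} {ι ι₁ ι₀ : Type}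
    {a : ι → NPoset} (ha : ∀ i, supNorm (a i) ≤ M) (pV : sumP k a ⟶ V)
    (hpV : ∀ z, Function.Surjective (pV.app z)) {b₁ : ι₁ → NPoset} {b₀ : ι₀ → NPoset}
    (hb₁ : ∀ i, supNorm (b₁ i) ≤ M) (dW : sumP k b₁ ⟶ sumP k b₀) (pW : sumP k b₀ ⟶ W)
    (hpW : ∀ z, Function.Surjective (pW.app z))
    (hdpW : ∀ z, Function.Exact (dW.app z) (pW.app z)) (f : V ⟶ W) :
    KernelGeneratedInDeg f M := by
  obtain ⟨ψ, π, hψπ, hcover⟩ := exists_sumP_pullback_cover (pV ≫ f) dW pW hpW hdpW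
  obtain ⟨ικ, gκ, hgκ, κ, hκ⟩ :=
    kernelGeneratedInDeg_of_map_injective (Sum.forall.2 ⟨ha, hb₁⟩) sumP.map_injective ψ
  refine ⟨ικ, gκ, hgκ, κ ≫ π ≫ pV, fun z v => ⟨fun hv => ?_, ?_⟩⟩
  · obtain ⟨x', rfl⟩ := hpV z v
    obtain ⟨c, hc, rfl⟩ := hcover z 0 x' (by simpa using hv.symm)
    obtain ⟨e, rfl⟩ := (hκ z c).1 hc
    exact ⟨e, rfl⟩
  · rintro ⟨e, rfl⟩
    have := congr(($hψπ).app z (κ.app z e))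
    simp only [NatTrans.comp_app_apply, (hκ z).apply_apply_eq_zero, map_zero] at this
    exact this.symm

theorem presentedInDeg_kernel {V W : NPoset ⥤ ModuleCat k} {M : ℕ}
    (hV : PresentedInDeg supNorm V M) (hW : PresentedInDeg supNorm W M) (f : V ⟶ W) :
    PresentedInDeg supNorm (kernel f) M := by
  obtain ⟨_, _, _, _, hV₁, hV₀, dV, pV, hpV, hdpV⟩ := presentedInDeg_iff.1 hV
  obtain ⟨_, _, _, _, hW₁, -, dW, pW, hpW, hdpW⟩ := presentedInDeg_iff.1 hW
  obtain ⟨_, g₀, hg₀, q, hq⟩ := kernelGeneratedInDeg_of_cover hV₀ pV hpV hW₁ dW pW hpW hdpW f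
  -- the relations of `ker f` form `ker q`, covered using the presentation of `V`
  obtain ⟨_, g₁, hg₁, r, hr⟩ := kernelGeneratedInDeg_of_cover hg₀ (𝟙 _)
    (fun _ => Function.surjective_id) hV₁ dV pV hpV hdpV q
  exact presentedInDeg_iff.2 ⟨_, _, g₁, g₀, hg₁, hg₀, r, _, kernel_lift_app_surjective f hq,
    fun z => (exact_kernel_lift_app_iff f hq r z).2 (hr z)⟩

theorem presentedInDeg_cokernel {V W : NPoset ⥤ ModuleCat k} {M : ℕ}
    (hV : PresentedInDeg supNorm V M) (hW : PresentedInDeg supNorm W M) (f : V ⟶ W) :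
    PresentedInDeg supNorm (cokernel f) M := by
  obtain ⟨_, _, _, a, -, ha, -, pV, hpV, -⟩ := presentedInDeg_iff.1 hV
  obtain ⟨_, _, b₁, b₀, hb₁, hb₀, dW, pW, hpW, hdpW⟩ := presentedInDeg_iff.1 hW
  obtain ⟨ψ, π, hψπ, hcover⟩ := exists_sumP_pullback_cover (pV ≫ f) dW pW hpW hdpW
  refine presentedInDeg_iff.2 ⟨_, _, _, b₀, Sum.forall.2 ⟨ha, hb₁⟩, hb₀, ψ, pW ≫ cokernel.π f,
    fun z => (cokernel_π_app_surjective f z).comp (hpW z), fun z x => ?_⟩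
  rw [NatTrans.comp_app_apply, exact_cokernel_π_app f z (pW.app z x)]
  constructor
  · rintro ⟨v, hv⟩
    obtain ⟨x', rfl⟩ := hpV z v
    obtain ⟨c, hc, -⟩ := hcover z x x' hv.symm
    exact ⟨c, hc⟩
  · rintro ⟨c, rfl⟩
    exact ⟨pV.app z (π.app z c), by simpa using congr(($hψπ).app z c).symm⟩

end

/-- If `f : V ⟶ W` is a morphism of `N`-modules with `V` presented in degrees `≤ m` and `W`
presented in degrees `≤ n` (sup norm), then the kernel and the cokernel of `f`, computed in the
functor category, are each presented in finite degrees. -/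
theorem stmt5 {k : Type} [CommRing k] (V W : NPoset ⥤ ModuleCat k) (m n : ℕ)
    (hV : PresentedInDeg supNorm V m) (hW : PresentedInDeg supNorm W n) (f : V ⟶ W) :
    ∃ N' : ℕ, PresentedInDeg supNorm (kernel f) N' ∧ PresentedInDeg supNorm (cokernel f) N' := by
  have hV' := hV.mono (le_max_left m n)
  have hW' := hW.mono (le_max_right m n)
  exact ⟨max m n, presentedInDeg_kernel hV' hW' f, presentedInDeg_cokernel hV' hW' f⟩
end
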